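/- Let X be a long space (a Hausdorff space in which every σ-compact subset has compact closure) and let M be a metrizable topological group with a compatible metric ρ. Let C_cpt(X, M) be the group, under pointwise operations, of continuous maps f : X → M with compact support, equipped with the topology of the sup-metric d(f, g) = sup_{x ∈ X} ρ(f(x), g(x)); for each compact K ⊆ X let C_K(X, M) be the subgroup of maps with support contained in K, with the subspace (uniform) topology. Then the sup-metric topology on C_cpt(X, M) coincides with the colimit space topology, i.e. the finest topology making each inclusion C_K(X, M) → C_cpt(X, M) continuous; in particular this colimit space topology is a group topology, so the family {C_K(X, M)}_{K compact} satisfies ACP. -/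

import Mathlib

open TopologicalSpace

/-- The topology underlying a metric space structure. -/
def metricTopology {Y : Type*} (m : MetricSpace Y) : TopologicalSpace Y :=
  m.toPseudoMetricSpace.toUniformSpace.toTopologicalSpace

variable (X : Type*) [TopologicalSpace X] [T2Space X]
variable (M : Type*) [MetricSpace M] [Group M] [IsTopologicalGroup M]

/-- The group (under pointwise operations) of continuous compactly supported `M`-valued maps
on `X`; the support of `f` is the closure of `{x | f x ≠ 1}`. -/
def Ccpt : Subgroup (X → M) where
  carrier := {f | Continuous f ∧ IsCompact (closure {x | f x ≠ 1})}
  one_mem' := by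
    refine ⟨continuous_const, ?_⟩
    have : {x : X | (1 : X → M) x ≠ 1} = ∅ := by ext x; simp
    rw [this, closure_empty]
    exact isCompact_empty
  mul_mem' := by
    rintro f g ⟨hfc, hfk⟩ ⟨hgc, hgk⟩
    refine ⟨hfc.mul hgc, ?_⟩
    refine (hfk.union hgk).of_isClosed_subset isClosed_closure ?_
    rw [← closure_union]
    refine closure_mono fun x hx => ?_
    by_contra hc
    simp only [Set.mem_union, Set.mem_setOf_eq, not_or, not_not] at hc
    exact hx (by simp [Pi.mul_apply, hc.1, hc.2])
  inv_mem' := by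
    rintro f ⟨hfc, hfk⟩
    refine ⟨hfc.inv, ?_⟩
    have : {x : X | f⁻¹ x ≠ 1} = {x | f x ≠ 1} := by
      ext x; simp [Pi.inv_apply, inv_eq_one]
    rw [this]
    exact hfk

/-!
The sup metric is the metric of uniform convergence, so its topology is sequential and is
therefore determined by convergent sequences. In a long space the supports of countably many
compactly supported maps lie in a single compact set `K`, so every convergent sequence together
with its limit lives in one `C_K(X, M)`; hence the metric topology is coherent with the family
`C_K(X, M)`, i.e. it is the colimit topology. It is a group topology because a continuous map is
uniformly continuous near a compact set, and compactly supported maps have compact range.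
-/

open Set Filter Topology BoundedContinuousFunction

theorem TendstoUniformly.comp_of_isCompact {ι α β γ : Type*} [UniformSpace β] [UniformSpace γ]
    {F : ι → α → β} {f : α → β} {p : Filter ι} (h : TendstoUniformly F f p) {s : Set β}
    (hs : IsCompact s) (hfs : ∀ x, f x ∈ s) {g : β → γ} (hg : ∀ b ∈ s, ContinuousAt g b) :
    TendstoUniformly (fun i => g ∘ F i) (g ∘ f) p :=
  fun _ hu => (h _ (hs.uniformContinuousAt_of_continuousAt g hg hu)).mono fun _ hi x => hi x (hfs x)

theorem TendstoUniformly.mul_of_isCompact_range {ι α M : Type*} [UniformSpace M] [Mul M]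
    [ContinuousMul M] {F G : ι → α → M} {f g : α → M} {p : Filter ι}
    (hF : TendstoUniformly F f p) (hG : TendstoUniformly G g p)
    (hf : IsCompact (range f)) (hg : IsCompact (range g)) :
    TendstoUniformly (F * G) (f * g) p := fun u hu =>
  (((hF.prodMk hG).comp_of_isCompact (hf.prod hg) (fun x => ⟨⟨x, rfl⟩, ⟨x, rfl⟩⟩)
    (g := fun q : M × M => q.1 * q.2) fun _ _ => continuous_mul.continuousAt) u hu).diag_of_prod

theorem TendstoUniformly.inv_of_isCompact_range {ι α M : Type*} [UniformSpace M] [Inv M]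
    [ContinuousInv M] {F : ι → α → M} {f : α → M} {p : Filter ι}
    (hF : TendstoUniformly F f p) (hf : IsCompact (range f)) :
    TendstoUniformly F⁻¹ f⁻¹ p :=
  hF.comp_of_isCompact hf (fun x => ⟨x, rfl⟩) fun _ _ => continuous_inv.continuousAt

namespace Topology.IsCoherentWith

variable {Y : Type*} [t : TopologicalSpace Y]

theorem of_seq_subset [SequentialSpace Y] {S : Set (Set Y)}
    (h : ∀ ⦃u : ℕ → Y⦄ ⦃y : Y⦄, Tendsto u atTop (𝓝 y) → ∃ s ∈ S, insert y (range u) ⊆ s) :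
    IsCoherentWith S :=
  (IsCoherentWith.of_seq (S := {t | ∃ s ∈ S, t ⊆ s}) h).enlarge fun _ => id

theorem eq_iSup_coinduced {ι : Type*} {p : ι → Prop} {s : ι → Set Y}
    (h : IsCoherentWith (s '' {i | p i})) :
    t = ⨆ (i) (_ : p i), coinduced ((↑) : s i → Y) (induced (↑) t) := by
  refine le_antisymm (fun u hu => h.isOpen_of_forall_induced u ?_)
    (iSup₂_le fun i _ => coinduced_le_iff_le_induced.2 le_rfl)
  rintro _ ⟨i, hi, rfl⟩
  exact isOpen_coinduced.1 (isOpen_iSup_iff.1 (isOpen_iSup_iff.1 hu i) hi)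

end Topology.IsCoherentWith

theorem exists_isCompact_forall_subset {X : Type*} [TopologicalSpace X]
    (hlong : ∀ A : Set X,
      (∃ K : ℕ → Set X, (∀ n, IsCompact (K n)) ∧ A = ⋃ n, K n) → IsCompact (closure A))
    {K : ℕ → Set X} (hK : ∀ n, IsCompact (K n)) : ∃ L, IsCompact L ∧ ∀ n, K n ⊆ L :=
  ⟨_, hlong _ ⟨K, hK, rfl⟩, fun n => (subset_iUnion K n).trans subset_closure⟩

/-- A copy of `Ccpt X M` carrying the sup metric: `Ccpt X M` itself already has the subspace
topology of the product topology on `X → M`. -/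
def CcptSup (X : Type*) [TopologicalSpace X] (M : Type*) [MetricSpace M] [Group M]
    [IsTopologicalGroup M] : Type _ :=
  Ccpt X M

namespace CcptSup

variable {X : Type*} [TopologicalSpace X] {M : Type*} [MetricSpace M] [Group M]
  [IsTopologicalGroup M]

instance : Group (CcptSup X M) := inferInstanceAs (Group (Ccpt X M))

lemma isCompact_range (f : CcptSup X M) : IsCompact (range f.1) :=
  HasCompactMulSupport.isCompact_range f.2.2 f.2.1

noncomputable def toBCF (f : CcptSup X M) : X →ᵇ M :=
  .mkOfBound ⟨f.1, f.2.1⟩ _ (Metric.isBounded_range_iff.1 (isCompact_range f).isBounded).choose_spec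

lemma toBCF_injective : Function.Injective (toBCF : CcptSup X M → X →ᵇ M) :=
  fun _ _ h => Subtype.ext (congrArg DFunLike.coe h)

noncomputable instance : MetricSpace (CcptSup X M) :=
  .induced toBCF toBCF_injective inferInstance

lemma dist_eq (f g : CcptSup X M) : dist f g = sSup (range fun x => dist (f.1 x) (g.1 x)) :=
  BoundedContinuousFunction.dist_eq_iSup

lemma isInducing_toBCF : IsInducing (toBCF : CcptSup X M → X →ᵇ M) := ⟨rfl⟩

lemma tendsto_nhds_iff {ι : Type*} {l : Filter ι} {u : ι → CcptSup X M} {f : CcptSup X M} :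
    Tendsto u l (𝓝 f) ↔ TendstoUniformly (fun i => (u i).1) f.1 l :=
  isInducing_toBCF.tendsto_nhds_iff.trans tendsto_iff_tendstoUniformly

instance : IsTopologicalGroup (CcptSup X M) where
  continuous_mul := continuous_iff_continuousAt.2 fun f => tendsto_nhds_iff.2 <|
    (tendsto_nhds_iff.1 continuousAt_fst).mul_of_isCompact_range
      (tendsto_nhds_iff.1 continuousAt_snd) (isCompact_range f.1) (isCompact_range f.2)
  continuous_inv := continuous_iff_continuousAt.2 fun f => tendsto_nhds_iff.2 <|
    (tendsto_nhds_iff.1 continuousAt_id).inv_of_isCompact_range (isCompact_range f)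

theorem isCoherentWith_mulTSupport_subset
    (hlong : ∀ A : Set X,
      (∃ K : ℕ → Set X, (∀ n, IsCompact (K n)) ∧ A = ⋃ n, K n) → IsCompact (closure A)) :
    IsCoherentWith ((fun K => {f : CcptSup X M | mulTSupport f.1 ⊆ K}) '' {K | IsCompact K}) :=
  IsCoherentWith.of_seq_subset fun u f _ => by
    obtain ⟨L, hL, hsub⟩ := exists_isCompact_forall_subset hlong
      (K := fun n => mulTSupport f.1 ∪ mulTSupport (u n).1) fun n => f.2.2.union (u n).2.2
    refine ⟨_, ⟨L, hL, rfl⟩, ?_⟩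
    rintro _ (rfl | ⟨n, rfl⟩)
    exacts [subset_union_left.trans (hsub 0), subset_union_right.trans (hsub n)]

end CcptSup

/-- Let `X` be a long space (every σ-compact subset has compact closure) and
`M` a metrizable topological group with compatible metric `dist`.  Then the sup-metric
`d(f,g) = sup_x dist (f x) (g x)` is a metric on `C_cpt(X, M)`, and its topology coincides
with the colimit space topology of the subgroups `C_K(X, M)` of maps supported in a compact
set `K` (each carrying the subspace (uniform) topology), i.e. the finest topology making all
inclusions continuous; in particular this colimit space topology is a group topology, so the
family `{C_K(X, M)}_K` satisfies ACP. -/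
theorem ccpt_colimit_of_long
    (hlong : ∀ A : Set X,
      (∃ K : ℕ → Set X, (∀ n, IsCompact (K n)) ∧ A = ⋃ n, K n) → IsCompact (closure A)) :
    ∃ dm : MetricSpace (Ccpt X M),
      (∀ f g : Ccpt X M, @dist _ dm.toPseudoMetricSpace.toDist f g
          = sSup (Set.range fun x : X => dist ((f : X → M) x) ((g : X → M) x))) ∧
      ∀ T : TopologicalSpace (Ccpt X M),
        T = (⨆ (K : Set X) (_ : IsCompact K),
            TopologicalSpace.coinduced
              (Subtype.val :
                {f : Ccpt X M // closure {x | (f : X → M) x ≠ 1} ⊆ K} → Ccpt X M)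
              (TopologicalSpace.induced Subtype.val (metricTopology dm))) →
          metricTopology dm = T ∧ @IsTopologicalGroup (Ccpt X M) T _ := by
  have hcolim := (CcptSup.isCoherentWith_mulTSupport_subset (M := M) hlong).eq_iSup_coinduced
  refine ⟨(inferInstance : MetricSpace (CcptSup X M)), CcptSup.dist_eq, fun T hT => ?_⟩
  subst hT
  exact ⟨hcolim, hcolim ▸ inferInstanceAs (IsTopologicalGroup (CcptSup X M))⟩
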